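/- The class of languages generated by admissible signed grammars is closed under marked concatenation: if L₁, L₂ ⊆ Σ* are each generated by an admissible signed grammar over Σ, and $ is a symbol not in Σ, then the language L₁ $ L₂ = { u $ v : u ∈ L₁, v ∈ L₂ } over the alphabet Σ ∪ {$} is generated by an admissible signed grammar over Σ ∪ {$}. -/

import Mathlib

/-- A parse-tree node: either a terminal leaf or an internal node labeled by a
nonterminal with a list of children. -/
inductive PTree (N : Type) (T : Type) : Type where
  | leaf (t : T) : PTree N T
  | node (A : N) (children : List (PTree N T)) : PTree N T

namespace PTree

variable {N T : Type}

/-- The symbol (nonterminal or terminal) labeling the root of a tree. -/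
def toSymbol : PTree N T → N ⊕ T
  | leaf t => Sum.inr t
  | node A _ => Sum.inl A

/-- The yield of a parse tree: the word spelled by its leaves. -/
def yield : PTree N T → List T
  | leaf t => [t]
  | node _ cs => cs.attach.flatMap (fun c => yield c.1)
decreasing_by simp only [PTree.node.sizeOf_spec]; have h := List.sizeOf_lt_of_mem c.2; omega

/-- The sign of a parse tree w.r.t. a sign assignment on productions:
the product of the signs of the productions used at its nodes. -/
def sign (σ : N × List (N ⊕ T) → ℤ) : PTree N T → ℤ
  | leaf _ => 1
  | node A cs => σ (A, cs.map toSymbol) * (cs.attach.map (fun c => sign σ c.1)).prod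
decreasing_by simp only [PTree.node.sizeOf_spec]; have h := List.sizeOf_lt_of_mem c.2; omega

/-- Validity of a parse tree w.r.t. a set of productions: at every internal node,
the node label together with the list of symbols of its children is a production. -/
inductive Valid (R : Set (N × List (N ⊕ T))) : PTree N T → Prop where
  | leaf (t : T) : Valid R (PTree.leaf t)
  | node (A : N) (cs : List (PTree N T)) :
      (A, cs.map toSymbol) ∈ R → (∀ c ∈ cs, Valid R c) → Valid R (PTree.node A cs)

end PTree

/-- A signed grammar over a (finite) terminal alphabet `T`: a context-free grammar
with finitely many nonterminals and productions, together with a sign `1` or `-1`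
attached to each production. -/
structure SignedGrammar (T : Type) : Type 1 where
  /-- the type of nonterminals -/
  N : Type
  finN : Finite N
  /-- the start symbol -/
  start : N
  /-- the productions `A → α`, `α ∈ (N ∪ T)*` -/
  rules : Set (N × List (N ⊕ T))
  finRules : rules.Finite
  /-- the sign of each production -/
  sign : N × List (N ⊕ T) → ℤ
  sign_valid : ∀ r ∈ rules, sign r = 1 ∨ sign r = -1

namespace SignedGrammar

variable {T : Type}

/-- A parse tree over the grammar: a valid tree whose root is labeled by the start symbol. -/
def IsParseTree (G : SignedGrammar T) (t : PTree G.N T) : Prop :=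
  PTree.Valid G.rules t ∧ t.toSymbol = Sum.inl G.start

/-- The set of parse trees over `G` with yield `w`. -/
def parseTreesOf (G : SignedGrammar T) (w : List T) : Set (PTree G.N T) :=
  {t | G.IsParseTree t ∧ t.yield = w}

/-- `G` is admissible if every word has only finitely many parse trees. -/
def Admissible (G : SignedGrammar T) : Prop :=
  ∀ w : List T, (G.parseTreesOf w).Finite

/-- `n_w(G)`: the sum of the signs of all parse trees over `G` with yield `w`. -/
noncomputable def count (G : SignedGrammar T) (w : List T) : ℤ :=
  ∑ᶠ t ∈ G.parseTreesOf w, t.sign G.sign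

/-- `G` generates the language `L` if `G` is admissible, `n_w(G) = 1` for every
`w ∈ L` and `n_w(G) = 0` for every `w ∉ L`. -/
def Generates (G : SignedGrammar T) (L : Language T) : Prop :=
  G.Admissible ∧ (∀ w ∈ L, G.count w = 1) ∧ (∀ w ∉ L, G.count w = 0)

/-- An ordinary context-free grammar: every production has sign `+1`. -/
def Ordinary (G : SignedGrammar T) : Prop :=
  ∀ r ∈ G.rules, G.sign r = 1

/-- The language generated by `G` in the usual sense: all yields of parse trees. -/
def language (G : SignedGrammar T) : Language T :=
  {w | ∃ t : PTree G.N T, G.IsParseTree t ∧ t.yield = w}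

/-- `G` is unambiguous if every word has at most one parse tree. -/
def Unambiguous (G : SignedGrammar T) : Prop :=
  ∀ t₁ t₂ : PTree G.N T, G.IsParseTree t₁ → G.IsParseTree t₂ →
    t₁.yield = t₂.yield → t₁ = t₂

/-- The number of parse trees of `G` with yield `w` (degree of ambiguity of `w`). -/
noncomputable def ambCount (G : SignedGrammar T) (w : List T) : ℕ :=
  Nat.card {t : PTree G.N T // t ∈ G.parseTreesOf w}

end SignedGrammar

/-!
Add a fresh start symbol `S` with the single production `S → S₁ $ S₂` of sign `1` to the disjoint
union of `G₁` and `G₂`. Since `S` occurs in no right-hand side and heads only this production,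
every parse tree is `S → t₁ $ t₂` for parse trees `tᵢ` of `Gᵢ`, obtained by relabelling; as `$` is
fresh, the yield `u $ v` of such a tree determines `u = yield t₁` and `v = yield t₂`. So the parse
trees of `u $ v` are in sign-multiplicative bijection with pairs, giving
`n_{u$v} = n_u(G₁) · n_v(G₂)`, while words not of the form `u $ v` have no parse tree at all.
-/

theorem List.exists_map_eq_of_forall_mem_image {α β : Type*} {f : α → β} {s : Set α}
    {l : List β} (h : ∀ b ∈ l, b ∈ f '' s) : ∃ l' : List α, (∀ a ∈ l', a ∈ s) ∧ l'.map f = l := by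
  choose g hgs hfg using h
  refine ⟨l.attach.map fun b => g b.1 b.2, ?_, ?_⟩
  · simp only [List.mem_map, List.mem_attach, true_and, Subtype.exists]
    rintro _ ⟨b, hb, rfl⟩
    exact hgs b hb
  simp only [List.map_map, Function.comp_def, hfg, List.attach_map_subtype_val]

theorem List.eq_of_map_eq_map {α β : Type*} {f : α → β} {l₁ l₂ : List α}
    (hf : ∀ a ∈ l₁, ∀ b, f a = f b → a = b) (h : l₁.map f = l₂.map f) : l₁ = l₂ := by
  refine List.ext_getElem (by simpa using congrArg List.length h) fun i h₁ h₂ => ?_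
  exact hf _ (List.getElem_mem h₁) _ <| by
    simpa [List.getElem?_eq_getElem h₁, List.getElem?_eq_getElem h₂] using congrArg (·[i]?) h

theorem List.map_some_append_none_cons_inj {α : Type*} {u u' v v' : List α} :
    u.map some ++ none :: v.map some = u'.map some ++ none :: v'.map some ↔ u = u' ∧ v = v' := by
  rw [List.append_cons_inj_of_notMem (by simp) (by simp),
    (List.map_injective_iff.2 (Option.some_injective α)).eq_iff,
    (List.map_injective_iff.2 (Option.some_injective α)).eq_iff]
  simp

def mapProduction {N T N' T' : Type} (φ : N → N') (ψ : T → T') (r : N × List (N ⊕ T)) :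
    N' × List (N' ⊕ T') :=
  (φ r.1, r.2.map (Sum.map φ ψ))

theorem mapProduction_injective {N T N' T' : Type} {φ : N → N'} {ψ : T → T'}
    (hφ : φ.Injective) (hψ : ψ.Injective) : (mapProduction φ ψ).Injective := by
  rintro ⟨A, α⟩ ⟨B, β⟩ h
  simp only [mapProduction, Prod.mk.injEq] at h
  exact Prod.ext (hφ h.1) (List.map_injective_iff.2 (Sum.map_injective.2 ⟨hφ, hψ⟩) h.2)

namespace PTree

variable {N T N' T' : Type}

@[simp] theorem toSymbol_leaf (t : T) : (leaf (N := N) t).toSymbol = .inr t := rfl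

@[simp] theorem toSymbol_node (A : N) (cs : List (PTree N T)) : (node A cs).toSymbol = .inl A := rfl

@[elab_as_elim]
theorem induction {motive : PTree N T → Prop} (leaf : ∀ t, motive (.leaf t))
    (node : ∀ A cs, (∀ c ∈ cs, motive c) → motive (.node A cs)) : ∀ t, motive t
  | .leaf t => leaf t
  | .node A cs => node A cs fun c _ => induction leaf node c

@[simp] theorem yield_leaf (t : T) : (leaf (N := N) t).yield = [t] := by rw [yield]

@[simp] theorem yield_node (A : N) (cs : List (PTree N T)) :
    (node A cs).yield = cs.flatMap yield := by
  rw [yield]; simp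

@[simp] theorem sign_leaf (σ : N × List (N ⊕ T) → ℤ) (t : T) : (leaf (N := N) t).sign σ = 1 := by
  rw [sign]

@[simp] theorem sign_node (σ : N × List (N ⊕ T) → ℤ) (A : N) (cs : List (PTree N T)) :
    (node A cs).sign σ = σ (A, cs.map toSymbol) * (cs.map (sign σ)).prod := by
  rw [sign]; simp

@[simp] def map (φ : N → N') (ψ : T → T') : PTree N T → PTree N' T'
  | .leaf t => .leaf (ψ t)
  | .node A cs => .node (φ A) (cs.map (map φ ψ))

variable (φ : N → N') (ψ : T → T')

@[simp] theorem toSymbol_map (t : PTree N T) : (t.map φ ψ).toSymbol = Sum.map φ ψ t.toSymbol := by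
  cases t <;> simp

theorem mapProduction_node (A : N) (cs : List (PTree N T)) :
    mapProduction φ ψ (A, cs.map toSymbol) = (φ A, (cs.map (map φ ψ)).map toSymbol) := by
  simp [mapProduction, Function.comp_def]

theorem yield_map (t : PTree N T) : (t.map φ ψ).yield = t.yield.map ψ := by
  induction t using PTree.induction with
  | leaf t => simp
  | node A cs ih =>
    simp only [map, yield_node, List.flatMap_map, List.map_flatMap]
    exact List.flatMap_congr ih

theorem sign_map {σ : N × List (N ⊕ T) → ℤ} {σ' : N' × List (N' ⊕ T') → ℤ}
    (hσ : ∀ r, σ' (mapProduction φ ψ r) = σ r) (t : PTree N T) :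
    (t.map φ ψ).sign σ' = t.sign σ := by
  induction t using PTree.induction with
  | leaf t => simp
  | node A cs ih =>
    rw [map, sign_node, sign_node, ← mapProduction_node, hσ, List.map_map]
    congr 2
    exact List.map_congr_left ih

theorem Valid.map {R : Set (N × List (N ⊕ T))} {R' : Set (N' × List (N' ⊕ T'))}
    (hR : Set.MapsTo (mapProduction φ ψ) R R') {t : PTree N T} (ht : Valid R t) :
    Valid R' (t.map φ ψ) := by
  induction ht with
  | leaf t => simpa using Valid.leaf (ψ t)
  | node A cs hr _ ih =>
    rw [PTree.map]
    refine .node _ _ (mapProduction_node φ ψ A cs ▸ hR hr) ?_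
    simpa using ih

variable {φ ψ}

theorem map_injective (hφ : φ.Injective) (hψ : ψ.Injective) : (map (T := T) φ ψ).Injective := by
  intro t₁
  induction t₁ using PTree.induction with
  | leaf t => rintro (_ | _) h <;> simp_all [hψ.eq_iff]
  | node A cs ih =>
    rintro (_ | ⟨B, ds⟩) h
    · simp at h
    · simp only [map, node.injEq, hφ.eq_iff] at h
      exact h.1 ▸ congrArg _ (List.eq_of_map_eq_map ih h.2)

theorem Valid.exists_map_eq {R : Set (N × List (N ⊕ T))} {R' : Set (N' × List (N' ⊕ T'))}
    (hφ : φ.Injective) (hψ : ψ.Injective)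
    (hR : ∀ A α', (φ A, α') ∈ R' → (φ A, α') ∈ mapProduction φ ψ '' R)
    {c : PTree N' T'} (hc : Valid R' c) {s : N ⊕ T} (hs : c.toSymbol = Sum.map φ ψ s) :
    ∃ t, Valid R t ∧ t.toSymbol = s ∧ t.map φ ψ = c := by
  have hF : (Sum.map φ ψ).Injective := Sum.map_injective.2 ⟨hφ, hψ⟩
  suffices ∀ c, Valid R' c → c.toSymbol ∈ Set.range (Sum.map φ ψ) →
      c ∈ PTree.map φ ψ '' {t | Valid R t} by
    obtain ⟨t, ht, rfl⟩ := this c hc ⟨s, hs.symm⟩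
    exact ⟨t, ht, hF (by rw [← toSymbol_map, hs]), rfl⟩
  intro c hc
  induction hc with
  | leaf t' =>
    rintro ⟨(_ | t), h⟩
    · simp at h
    · exact ⟨.leaf t, .leaf t, by simpa using h⟩
  | node B cs hr _ ih =>
    rintro ⟨(A | _), h⟩
    · simp only [Sum.map_inl, toSymbol, Sum.inl.injEq] at h
      subst h
      obtain ⟨⟨A', α⟩, hα, he⟩ := hR A _ hr
      simp only [mapProduction, Prod.mk.injEq, hφ.eq_iff] at he
      obtain ⟨rfl, he⟩ := he
      obtain ⟨ts, hts, rfl⟩ := List.exists_map_eq_of_forall_mem_image fun c hc' => by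
        obtain ⟨a, -, ha⟩ := List.mem_map.1 (he ▸ List.mem_map_of_mem (f := toSymbol) hc')
        exact ih c hc' ⟨a, ha⟩
      refine ⟨.node A' ts, .node _ _ ?_ hts, by rw [PTree.map]⟩
      have hα' : α = ts.map toSymbol := List.map_injective_iff.2 hF
        (he.trans (congrArg Prod.snd (mapProduction_node φ ψ A' ts)).symm)
      rwa [← hα']
    · simp at h

end PTree

theorem finsum_mem_prod_mul {α β R : Type*} [CommSemiring R] {s : Set α} {t : Set β}
    (hs : s.Finite) (ht : t.Finite) (f : α → R) (g : β → R) :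
    ∑ᶠ p ∈ s ×ˢ t, f p.1 * g p.2 = (∑ᶠ a ∈ s, f a) * ∑ᶠ b ∈ t, g b := by
  classical
  rw [← hs.coe_toFinset, ← ht.coe_toFinset, ← Finset.coe_product, finsum_mem_coe_finset,
    finsum_mem_coe_finset, finsum_mem_coe_finset, Finset.sum_product, Finset.sum_mul_sum]

section MarkedConcatSign

variable {N₁ N₂ T : Type} (σ₁ : N₁ × List (N₁ ⊕ T) → ℤ) (σ₂ : N₂ × List (N₂ ⊕ T) → ℤ)

theorem mapProduction_some_inl_injective :
    (mapProduction (some ∘ .inl : N₁ → Option (N₁ ⊕ N₂)) (some : T → Option T)).Injective :=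
  mapProduction_injective ((Option.some_injective _).comp Sum.inl_injective)
    (Option.some_injective _)

theorem mapProduction_some_inr_injective :
    (mapProduction (some ∘ .inr : N₂ → Option (N₁ ⊕ N₂)) (some : T → Option T)).Injective :=
  mapProduction_injective ((Option.some_injective _).comp Sum.inr_injective)
    (Option.some_injective _)

noncomputable def markedConcatSign :
    Option (N₁ ⊕ N₂) × List (Option (N₁ ⊕ N₂) ⊕ Option T) → ℤ :=
  Function.extend (mapProduction (some ∘ .inl) some) σ₁
    (Function.extend (mapProduction (some ∘ .inr) some) σ₂ 1)

theorem markedConcatSign_inl (r : N₁ × List (N₁ ⊕ T)) :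
    markedConcatSign σ₁ σ₂ (mapProduction (some ∘ .inl) some r) = σ₁ r :=
  mapProduction_some_inl_injective.extend_apply _ _ r

theorem markedConcatSign_inr (r : N₂ × List (N₂ ⊕ T)) :
    markedConcatSign σ₁ σ₂ (mapProduction (some ∘ .inr) some r) = σ₂ r := by
  rw [markedConcatSign, Function.extend_apply' _ _ _ (by simp [mapProduction]),
    mapProduction_some_inr_injective.extend_apply]

theorem markedConcatSign_none (α : List (Option (N₁ ⊕ N₂) ⊕ Option T)) :
    markedConcatSign σ₁ σ₂ (none, α) = 1 := by
  rw [markedConcatSign, Function.extend_apply' _ _ _ (by simp [mapProduction]),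
    Function.extend_apply' _ _ _ (by simp [mapProduction]), Pi.one_apply]

end MarkedConcatSign

namespace SignedGrammar

variable {T : Type} (G₁ G₂ : SignedGrammar T)

/-- The nonterminal `none` is the new start symbol `S` and the terminal `none` is the marker `$`. -/
@[reducible] noncomputable def markedConcat : SignedGrammar (Option T) where
  N := Option (G₁.N ⊕ G₂.N)
  finN := have := G₁.finN; have := G₂.finN; inferInstance
  start := none
  rules := insert (none, [.inl (some (.inl G₁.start)), .inr none, .inl (some (.inr G₂.start))])
    (mapProduction (some ∘ .inl) some '' G₁.rules ∪ mapProduction (some ∘ .inr) some '' G₂.rules)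
  finRules := ((G₁.finRules.image _).union (G₂.finRules.image _)).insert _
  sign := markedConcatSign G₁.sign G₂.sign
  sign_valid := by
    rintro _ (rfl | ⟨r, hr, rfl⟩ | ⟨r, hr, rfl⟩)
    · exact .inl (markedConcatSign_none _ _ _)
    · exact markedConcatSign_inl G₁.sign G₂.sign r ▸ G₁.sign_valid r hr
    · exact markedConcatSign_inr G₁.sign G₂.sign r ▸ G₂.sign_valid r hr

def markedConcatTree (t₁ : PTree G₁.N T) (t₂ : PTree G₂.N T) :
    PTree (G₁.markedConcat G₂).N (Option T) :=
  .node none [t₁.map (some ∘ .inl) some, .leaf none, t₂.map (some ∘ .inr) some]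

variable {G₁ G₂}

theorem yield_markedConcatTree (t₁ : PTree G₁.N T) (t₂ : PTree G₂.N T) :
    (markedConcatTree G₁ G₂ t₁ t₂).yield = t₁.yield.map some ++ none :: t₂.yield.map some := by
  simp [markedConcatTree, PTree.yield_map]

theorem sign_markedConcatTree (t₁ : PTree G₁.N T) (t₂ : PTree G₂.N T) :
    (markedConcatTree G₁ G₂ t₁ t₂).sign (G₁.markedConcat G₂).sign =
      t₁.sign G₁.sign * t₂.sign G₂.sign := by
  simp [markedConcatTree, markedConcat, markedConcatSign_none,
    PTree.sign_map _ _ (markedConcatSign_inl G₁.sign G₂.sign),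
    PTree.sign_map _ _ (markedConcatSign_inr G₁.sign G₂.sign)]

theorem markedConcatTree_injective2 : Function.Injective2 (markedConcatTree G₁ G₂) := by
  intro t₁ t₁' t₂ t₂' h
  simp only [markedConcatTree, PTree.node.injEq, List.cons.injEq, true_and, and_true] at h
  exact ⟨PTree.map_injective ((Option.some_injective _).comp Sum.inl_injective)
      (Option.some_injective _) h.1,
    PTree.map_injective ((Option.some_injective _).comp Sum.inr_injective)
      (Option.some_injective _) h.2⟩

theorem isParseTree_markedConcatTree {t₁ : PTree G₁.N T} {t₂ : PTree G₂.N T}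
    (h₁ : G₁.IsParseTree t₁) (h₂ : G₂.IsParseTree t₂) :
    (G₁.markedConcat G₂).IsParseTree (markedConcatTree G₁ G₂ t₁ t₂) := by
  refine ⟨.node _ _ (.inl ?_) ?_, rfl⟩
  · simp [PTree.toSymbol_map, h₁.2, h₂.2]
  · simp only [List.mem_cons, List.not_mem_nil, or_false]
    rintro c (rfl | rfl | rfl)
    · exact h₁.1.map _ _ fun r hr => .inr (.inl ⟨r, hr, rfl⟩)
    · exact .leaf none
    · exact h₂.1.map _ _ fun r hr => .inr (.inr ⟨r, hr, rfl⟩)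

theorem mem_image_of_mem_rules_markedConcat_inl {A : G₁.N} {α}
    (h : (some (.inl A), α) ∈ (G₁.markedConcat G₂).rules) :
    (some (.inl A), α) ∈ mapProduction (some ∘ .inl) some '' G₁.rules := by
  rcases h with h | h | ⟨r, -, h⟩
  · simp at h
  · exact h
  · simp [mapProduction] at h

theorem mem_image_of_mem_rules_markedConcat_inr {A : G₂.N} {α}
    (h : (some (.inr A), α) ∈ (G₁.markedConcat G₂).rules) :
    (some (.inr A), α) ∈ mapProduction (some ∘ .inr) some '' G₂.rules := by
  rcases h with h | ⟨r, -, h⟩ | h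
  · simp at h
  · simp [mapProduction] at h
  · exact h

theorem IsParseTree.exists_markedConcatTree_eq {t : PTree (G₁.markedConcat G₂).N (Option T)}
    (ht : (G₁.markedConcat G₂).IsParseTree t) :
    ∃ t₁ t₂, G₁.IsParseTree t₁ ∧ G₂.IsParseTree t₂ ∧ markedConcatTree G₁ G₂ t₁ t₂ = t := by
  obtain ⟨hv, hroot⟩ := ht
  rcases hv with _ | ⟨_, cs, hr, hcs⟩
  · simp at hroot
  obtain rfl : _ = none := by simpa using hroot
  have hstart : cs.map PTree.toSymbol =
      [.inl (some (.inl G₁.start)), .inr none, .inl (some (.inr G₂.start))] := by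
    rcases hr with h | ⟨r, -, h⟩ | ⟨r, -, h⟩
    · exact (Prod.mk.inj h).2
    all_goals simp [mapProduction] at h
  simp only [List.map_eq_cons_iff, List.map_eq_nil_iff] at hstart
  obtain ⟨c₁, _, rfl, hs₁, c₂, _, rfl, hs₂, c₃, _, rfl, hs₃, rfl⟩ := hstart
  obtain ⟨t₁, hv₁, hr₁, rfl⟩ := (hcs c₁ (by simp)).exists_map_eq
    ((Option.some_injective _).comp Sum.inl_injective) (Option.some_injective _)
    (fun _ _ => mem_image_of_mem_rules_markedConcat_inl) (s := .inl G₁.start) hs₁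
  obtain ⟨t₂, hv₂, hr₂, rfl⟩ := (hcs c₃ (by simp)).exists_map_eq
    ((Option.some_injective _).comp Sum.inr_injective) (Option.some_injective _)
    (fun _ _ => mem_image_of_mem_rules_markedConcat_inr) (s := .inl G₂.start) hs₃
  obtain rfl : c₂ = .leaf none := by cases c₂ <;> simp_all
  exact ⟨t₁, t₂, ⟨hv₁, hr₁⟩, ⟨hv₂, hr₂⟩, rfl⟩

theorem parseTreesOf_markedConcat (u v : List T) :
    (G₁.markedConcat G₂).parseTreesOf (u.map some ++ none :: v.map some) =
      Function.uncurry (markedConcatTree G₁ G₂) '' (G₁.parseTreesOf u ×ˢ G₂.parseTreesOf v) := by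
  ext t
  constructor
  · rintro ⟨ht, hw⟩
    obtain ⟨t₁, t₂, h₁, h₂, rfl⟩ := ht.exists_markedConcatTree_eq
    rw [yield_markedConcatTree, List.map_some_append_none_cons_inj] at hw
    exact ⟨(t₁, t₂), ⟨⟨h₁, hw.1⟩, ⟨h₂, hw.2⟩⟩, rfl⟩
  · rintro ⟨⟨t₁, t₂⟩, ⟨⟨h₁, rfl⟩, ⟨h₂, rfl⟩⟩, rfl⟩
    exact ⟨isParseTree_markedConcatTree h₁ h₂, yield_markedConcatTree t₁ t₂⟩

theorem parseTreesOf_markedConcat_eq_empty {w : List (Option T)}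
    (hw : ∀ u v : List T, w ≠ u.map some ++ none :: v.map some) :
    (G₁.markedConcat G₂).parseTreesOf w = ∅ := by
  refine Set.eq_empty_of_forall_notMem fun t ⟨ht, hyield⟩ => ?_
  obtain ⟨t₁, t₂, -, -, rfl⟩ := ht.exists_markedConcatTree_eq
  exact hw t₁.yield t₂.yield (hyield ▸ yield_markedConcatTree t₁ t₂)

theorem Admissible.markedConcat (h₁ : G₁.Admissible) (h₂ : G₂.Admissible) :
    (G₁.markedConcat G₂).Admissible := by
  intro w
  by_cases hw : ∃ u v : List T, w = u.map some ++ none :: v.map some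
  · obtain ⟨u, v, rfl⟩ := hw
    rw [parseTreesOf_markedConcat]
    exact ((h₁ u).prod (h₂ v)).image _
  · push Not at hw
    rw [parseTreesOf_markedConcat_eq_empty hw]
    exact Set.finite_empty

theorem count_markedConcat (h₁ : G₁.Admissible) (h₂ : G₂.Admissible) (u v : List T) :
    (G₁.markedConcat G₂).count (u.map some ++ none :: v.map some) = G₁.count u * G₂.count v := by
  rw [count, count, count, parseTreesOf_markedConcat,
    finsum_mem_image markedConcatTree_injective2.uncurry.injOn, ← finsum_mem_prod_mul (h₁ u) (h₂ v)]
  exact finsum_mem_congr rfl fun p _ => sign_markedConcatTree p.1 p.2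

theorem count_markedConcat_eq_zero {w : List (Option T)}
    (hw : ∀ u v : List T, w ≠ u.map some ++ none :: v.map some) :
    (G₁.markedConcat G₂).count w = 0 := by
  rw [count, parseTreesOf_markedConcat_eq_empty hw, finsum_mem_empty]

end SignedGrammar

theorem signed_grammar_closed_under_marked_concatenation_general
    (T : Type) (L₁ L₂ : Language T)
    (G₁ G₂ : SignedGrammar T) (h₁ : G₁.Generates L₁) (h₂ : G₂.Generates L₂) :
    ∃ G : SignedGrammar (Option T),
      G.Generates {w : List (Option T) |
        ∃ u ∈ L₁, ∃ v ∈ L₂, w = u.map some ++ (none : Option T) :: v.map some} := by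
  obtain ⟨adm₁, one₁, zero₁⟩ := h₁
  obtain ⟨adm₂, one₂, zero₂⟩ := h₂
  refine ⟨G₁.markedConcat G₂, adm₁.markedConcat adm₂, ?_, fun w hw => ?_⟩
  · rintro _ ⟨u, hu, v, hv, rfl⟩
    rw [SignedGrammar.count_markedConcat adm₁ adm₂, one₁ u hu, one₂ v hv, mul_one]
  by_cases hmarked : ∃ u v : List T, w = u.map some ++ none :: v.map some
  · obtain ⟨u, v, rfl⟩ := hmarked
    rw [SignedGrammar.count_markedConcat adm₁ adm₂]
    by_cases hu : u ∈ L₁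
    · rw [zero₂ v fun hv => hw ⟨u, hu, v, hv, rfl⟩, mul_zero]
    · rw [zero₁ u hu, zero_mul]
  · push Not at hmarked
    exact SignedGrammar.count_markedConcat_eq_zero hmarked

/-- Languages generated by admissible signed grammars are closed under marked
concatenation `L₁ $ L₂`, where the marker `$` (modeled as `none` in `Option T`)
is a fresh symbol not in `T`. -/
theorem signed_grammar_closed_under_marked_concatenation
    (T : Type) [Fintype T] (L₁ L₂ : Language T)
    (G₁ G₂ : SignedGrammar T) (h₁ : G₁.Generates L₁) (h₂ : G₂.Generates L₂) :
    ∃ G : SignedGrammar (Option T),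
      G.Generates {w : List (Option T) |
        ∃ u ∈ L₁, ∃ v ∈ L₂, w = u.map some ++ (none : Option T) :: v.map some} :=
  signed_grammar_closed_under_marked_concatenation_general T L₁ L₂ G₁ G₂ h₁ h₂
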